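/- For the upright posture q = (0, 0, q₃ᵣₑf) (both legs aligned, torso at the reference angle), there exists u ∈ ℝ² with G(q) + B u = 0 if and only if M_T l sin(q₃ᵣₑf − λ) = (M_T + M_H + m) r sin(λ). In particular, if λ ∈ (0, π/2), static equilibrium at this posture requires sin(q₃ᵣₑf − λ)/sin(λ) = (M_T + M_H + m) r / (M_T l). -/
import Mathlib


open Matrix Real

/-- Gravity vector `G(q)` of the three-link planar biped on an incline of angle `lam`. -/
noncomputable def Gvec (m MH MT l r g lam : ℝ) (q : Fin 3 → ℝ) : Fin 3 → ℝ :=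
  ![(g*r/2)*(2*MH + 2*MT + 3*m)*Real.sin (q 0 - lam),
    -(g*m*r/2)*Real.sin (q 1 - lam),
    MT*g*l*Real.sin (q 2 - lam)]

/-- Input matrix `B` of the three-link planar biped. -/
def Bmat : Matrix (Fin 3) (Fin 2) ℝ :=
  !![-1, 0; 0, -1; 1, 1]

/-- For the upright posture `q = (0,0,q₃ᵣₑf)`, there exists `u` with `G(q) + B u = 0` iff
`M_T l sin(q₃ᵣₑf − λ) = (M_T + M_H + m) r sin λ`. In particular, if `λ ∈ (0, π/2)`, static
equilibrium at this posture requires `sin(q₃ᵣₑf − λ)/sin λ = (M_T + M_H + m) r / (M_T l)`. -/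
theorem upright_equilibrium_iff (m MH MT l r g lam q3ref : ℝ) (hm : 0 < m) (hMH : 0 < MH)
    (hMT : 0 < MT) (hl : 0 < l) (hr : 0 < r) (hg : 0 < g) :
    ((∃ u : Fin 2 → ℝ, Gvec m MH MT l r g lam ![0, 0, q3ref] + Bmat.mulVec u = 0) ↔
      MT * l * Real.sin (q3ref - lam) = (MT + MH + m) * r * Real.sin lam) ∧
    (lam ∈ Set.Ioo 0 (Real.pi/2) →
      (∃ u : Fin 2 → ℝ, Gvec m MH MT l r g lam ![0, 0, q3ref] + Bmat.mulVec u = 0) →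
      Real.sin (q3ref - lam) / Real.sin lam = (MT + MH + m) * r / (MT * l)) := by
  have key : (∃ u : Fin 2 → ℝ, Gvec m MH MT l r g lam ![0, 0, q3ref] + Bmat.mulVec u = 0) ↔
      MT * l * Real.sin (q3ref - lam) = (MT + MH + m) * r * Real.sin lam := by
    constructor
    · rintro ⟨u, hu⟩
      have h0 := congrFun hu 0
      have h1 := congrFun hu 1
      have h2 := congrFun hu 2
      simp [Gvec, Bmat, Matrix.mulVec, dotProduct, Fin.sum_univ_two] at h0 h1 h2
      have hg' : g ≠ 0 := ne_of_gt hg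
      have hsum : g * (MT * l * Real.sin (q3ref - lam)) =
          g * ((MT + MH + m) * r * Real.sin lam) := by nlinarith [h0, h1, h2]
      exact mul_left_cancel₀ hg' hsum
    · intro h
      refine ⟨![(g*r/2)*(2*MH + 2*MT + 3*m)*Real.sin (0 - lam),
        -(g*m*r/2)*Real.sin (0 - lam)], ?_⟩
      funext i
      fin_cases i <;>
        simp [Gvec, Bmat, Matrix.mulVec, dotProduct, Fin.sum_univ_two] <;>
        nlinarith [h]
  refine ⟨key, fun hlam hex => ?_⟩
  have h := key.mp hex
  have hsl : Real.sin lam ≠ 0 :=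
    ne_of_gt (Real.sin_pos_of_pos_of_lt_pi hlam.1 (lt_trans hlam.2 (by linarith [Real.pi_pos])))
  have hML : MT * l ≠ 0 := ne_of_gt (mul_pos hMT hl)
  field_simp
  linarith [h]
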